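/- Let B₀ ∈ ℝ^{n×n} and A₀ ∈ ℝ^{m×m} be symmetric positive definite, with c₁,…,c_n the columns of B₀^{1/2} and d₁,…,d_m the columns of A₀^{1/2}. For w ∈ ℝ^{mn} let 𝔻₀(w) be the mn×mn block-diagonal matrix whose k-th n×n block has entries 𝔻₀^(k)_{ij}(w) = wᵀ((c_i c_jᵀ) ⊗ (d_k d_kᵀ))w. Then: (i) 𝔻₀(w) is positive semidefinite for every w ∈ ℝ^{mn}; (ii) its nuclear norm satisfies ‖𝔻₀(w)‖_* = wᵀ (B₀ ⊗ A₀) w; and (iii) sup over w ∈ S^{mn−1} of ‖𝔻₀(w)‖_* equals ‖B₀‖₂ ‖A₀‖₂. -/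

import Mathlib

/-!
The `k`-th block of `𝔻₀(w)` is the rank-one matrix `u_k u_kᵀ` with `(u_k)_i = wᵀ(c_i ⊗ d_k)`, so
`𝔻₀(w) ⪰ 0` and its nuclear norm is its trace `∑_k ‖u_k‖²`. When `c_i`, `d_k` are the columns of
`B₀^{1/2}`, `A₀^{1/2}`, the `u_k` stack to `(B₀^{1/2} ⊗ A₀^{1/2})ᵀ w`, whose squared length is
`wᵀ(B₀ ⊗ A₀)w`.

For `M ⪰ 0`, the supremum `r` of `wᵀMw` on the unit sphere is the least `r` with `M ⪯ r I`. It
equals `‖M‖₂`, since `M ⪯ r I` forces `M² ⪯ r M ⪯ r² I`. It is multiplicative under `⊗`: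
`M ⊗ N ⪯ (r I) ⊗ N ⪯ (r I) ⊗ (s I)`, and product vectors `b ⊗ a` give the reverse inequality.
-/

open MeasureTheory Matrix Finset
open scoped Kronecker

/-- Euclidean (ℓ₂) norm of a vector. -/
noncomputable def e2 {ι : Type*} [Fintype ι] (v : ι → ℝ) : ℝ :=
  Real.sqrt (∑ i, v i ^ 2)

/-- Operator (spectral) norm of a matrix. -/
noncomputable def opNorm {α β : Type*} [Fintype α] [Fintype β]
    (M : Matrix α β ℝ) : ℝ :=
  sSup {r | ∃ q : β → ℝ, e2 q ≤ 1 ∧ r = e2 (M.mulVec q)}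

/-- Nuclear (trace) norm of a real square matrix: `‖M‖_* = tr √(MᵀM)`. -/
noncomputable def nucNorm {ι : Type*} [Fintype ι] [DecidableEq ι]
    (M : Matrix ι ι ℝ) : ℝ :=
  ((Matrix.posSemidef_conjTranspose_mul_self M).1.eigenvectorUnitary.1 *
    Matrix.diagonal ((RCLike.ofReal : ℝ → ℝ) ∘ Real.sqrt ∘
      (Matrix.posSemidef_conjTranspose_mul_self M).1.eigenvalues) *
    (star (Matrix.posSemidef_conjTranspose_mul_self M).1.eigenvectorUnitary :
      Matrix ι ι ℝ)).trace

/-- The block-diagonal matrix `𝔻₀(w)` with `k`-th block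
`(wᵀ((c_i c_jᵀ) ⊗ (d_k d_kᵀ))w)_{ij}`. -/
noncomputable def D0 {n m : ℕ} (c : Fin n → Fin n → ℝ) (d : Fin m → Fin m → ℝ)
    (w : Fin n × Fin m → ℝ) :
    Matrix (Fin n × Fin m) (Fin n × Fin m) ℝ :=
  Matrix.blockDiagonal fun k => Matrix.of fun i j =>
    w ⬝ᵥ ((Matrix.vecMulVec (c i) (c j) ⊗ₖ Matrix.vecMulVec (d k) (d k)).mulVec w)

open scoped MatrixOrder

section EuclideanNorm

variable {ι : Type*} [Fintype ι]

lemma e2_eq_norm (v : ι → ℝ) : e2 v = ‖(WithLp.toLp 2 v : EuclideanSpace ℝ ι)‖ := by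
  simp [e2, EuclideanSpace.norm_eq]

lemma e2_nonneg (v : ι → ℝ) : 0 ≤ e2 v := Real.sqrt_nonneg _

lemma e2_sq (v : ι → ℝ) : e2 v ^ 2 = v ⬝ᵥ v := by
  rw [e2, Real.sq_sqrt (by positivity)]
  simp [dotProduct, sq]

lemma e2_smul (c : ℝ) (v : ι → ℝ) : e2 (c • v) = |c| * e2 v := by
  simp only [e2_eq_norm, WithLp.toLp_smul, norm_smul, Real.norm_eq_abs]

lemma dotProduct_le_e2_mul_e2 (u v : ι → ℝ) : u ⬝ᵥ v ≤ e2 u * e2 v := by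
  simpa [e2_eq_norm, EuclideanSpace.inner_toLp_toLp, dotProduct_comm] using
    real_inner_le_norm (WithLp.toLp 2 u : EuclideanSpace ℝ ι) (WithLp.toLp 2 v)

lemma dotProduct_mulVec_le_e2_mulVec (M : Matrix ι ι ℝ) {w : ι → ℝ} (hw : e2 w = 1) :
    w ⬝ᵥ M *ᵥ w ≤ e2 (M *ᵥ w) := by
  simpa [hw] using dotProduct_le_e2_mul_e2 w (M *ᵥ w)

lemma e2_mulVec_le_norm [DecidableEq ι] (M : Matrix ι ι ℝ) {q : ι → ℝ} (hq : e2 q ≤ 1) :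
    e2 (M *ᵥ q) ≤ ‖toEuclideanCLM (𝕜 := ℝ) M‖ :=
  calc e2 (M *ᵥ q) ≤ ‖toEuclideanCLM (𝕜 := ℝ) M‖ * e2 q := by
        simpa [e2_eq_norm, toEuclideanCLM_toLp] using
          (toEuclideanCLM (𝕜 := ℝ) M).le_opNorm (WithLp.toLp 2 q)
    _ ≤ ‖toEuclideanCLM (𝕜 := ℝ) M‖ := mul_le_of_le_one_right (norm_nonneg _) hq

lemma e2_kronecker {κ : Type*} [Fintype κ] (b : ι → ℝ) (a : κ → ℝ) :
    e2 (fun p : ι × κ => b p.1 * a p.2) = e2 b * e2 a := by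
  rw [e2, e2, e2, ← Real.sqrt_mul (by positivity), Fintype.sum_prod_type, Finset.sum_mul_sum]
  simp only [mul_pow]

end EuclideanNorm

section Rayleigh

variable {ι : Type*} [Fintype ι]

noncomputable def rayleighSup (M : Matrix ι ι ℝ) : ℝ :=
  sSup {x | ∃ w : ι → ℝ, e2 w = 1 ∧ x = w ⬝ᵥ M *ᵥ w}

lemma rayleighSup_nonneg {M : Matrix ι ι ℝ} (hM : M.PosSemidef) : 0 ≤ rayleighSup M := by
  refine Real.sSup_nonneg ?_
  rintro _ ⟨w, -, rfl⟩
  simpa using hM.dotProduct_mulVec_nonneg w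

variable [DecidableEq ι]

lemma quadForm_le_rayleighSup (M : Matrix ι ι ℝ) {w : ι → ℝ} (hw : e2 w = 1) :
    w ⬝ᵥ M *ᵥ w ≤ rayleighSup M := by
  refine le_csSup ⟨‖toEuclideanCLM (𝕜 := ℝ) M‖, ?_⟩ ⟨w, hw, rfl⟩
  rintro _ ⟨v, hv, rfl⟩
  exact (dotProduct_mulVec_le_e2_mulVec M hv).trans (e2_mulVec_le_norm M hv.le)

lemma quadForm_le_rayleighSup_mul (M : Matrix ι ι ℝ) (w : ι → ℝ) :
    w ⬝ᵥ M *ᵥ w ≤ rayleighSup M * (w ⬝ᵥ w) := by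
  rcases eq_or_ne (e2 w) 0 with h0 | h0
  · have : w = 0 := dotProduct_self_eq_zero.mp (by rw [← e2_sq, h0]; ring)
    simp [this]
  · have hu : e2 ((e2 w)⁻¹ • w) = 1 := by
      rw [e2_smul, abs_inv, abs_of_nonneg (e2_nonneg w), inv_mul_cancel₀ h0]
    have hw : w = e2 w • ((e2 w)⁻¹ • w) := by rw [smul_smul, mul_inv_cancel₀ h0, one_smul]
    calc w ⬝ᵥ M *ᵥ w = e2 w ^ 2 * (((e2 w)⁻¹ • w) ⬝ᵥ M *ᵥ ((e2 w)⁻¹ • w)) := by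
          conv_lhs => rw [hw]
          simp only [mulVec_smul, dotProduct_smul, smul_dotProduct, smul_eq_mul]; ring
      _ ≤ e2 w ^ 2 * rayleighSup M := by gcongr; exact quadForm_le_rayleighSup M hu
      _ = rayleighSup M * (w ⬝ᵥ w) := by rw [e2_sq, mul_comm]

lemma quadForm_le_of_le_smul_one {M : Matrix ι ι ℝ} {r : ℝ} (h : M ≤ r • 1) (w : ι → ℝ) :
    w ⬝ᵥ M *ᵥ w ≤ r * (w ⬝ᵥ w) := by
  have := (le_iff.mp h).dotProduct_mulVec_nonneg w
  simp only [star_trivial, sub_mulVec, smul_mulVec, one_mulVec, dotProduct_sub,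
    dotProduct_smul, smul_eq_mul] at this
  linarith

lemma le_smul_one_of_quadForm_le {M : Matrix ι ι ℝ} {r : ℝ} (hM : M.IsHermitian)
    (h : ∀ w, w ⬝ᵥ M *ᵥ w ≤ r * (w ⬝ᵥ w)) : M ≤ r • 1 := by
  refine le_iff.mpr (PosSemidef.of_dotProduct_mulVec_nonneg ?_ fun w => ?_)
  · exact (isHermitian_one.smul (IsSelfAdjoint.all r)).sub hM
  · simp only [star_trivial, sub_mulVec, smul_mulVec, one_mulVec, dotProduct_sub,
      dotProduct_smul, smul_eq_mul]
    linarith [h w]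

lemma le_rayleighSup_smul_one {M : Matrix ι ι ℝ} (hM : M.IsHermitian) :
    M ≤ rayleighSup M • 1 :=
  le_smul_one_of_quadForm_le hM (quadForm_le_rayleighSup_mul M)

lemma rayleighSup_le_of_le_smul_one {M : Matrix ι ι ℝ} {r : ℝ} (h : M ≤ r • 1) (hr : 0 ≤ r) :
    rayleighSup M ≤ r := by
  refine Real.sSup_le ?_ hr
  rintro _ ⟨w, hw, rfl⟩
  simpa [← e2_sq, hw] using quadForm_le_of_le_smul_one h w

lemma mul_self_le_sq_smul_one {M : Matrix ι ι ℝ} {r : ℝ} (hM : M.PosSemidef) (hr : 0 ≤ r)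
    (h : M ≤ r • 1) : M * M ≤ r ^ 2 • 1 := by
  obtain ⟨S, hSM, hS⟩ : ∃ S : Matrix ι ι ℝ, S * S = M ∧ Sᴴ = S :=
    ⟨CFC.sqrt M, CFC.sqrt_mul_sqrt_self M hM.nonneg,
      (nonneg_iff_posSemidef.mp (CFC.sqrt_nonneg M)).1⟩
  calc M * M ≤ r • M := by
        have key : r • M - M * M = Sᴴ * (r • 1 - M) * S := by
          rw [hS, ← hSM]; simp only [mul_sub, sub_mul, mul_smul_comm, smul_mul_assoc, mul_one,
            mul_assoc]
        exact le_iff.mpr (key ▸ (le_iff.mp h).conjTranspose_mul_mul_same S)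
    _ ≤ r • (r • 1) := smul_le_smul_of_nonneg_left h hr
    _ = r ^ 2 • 1 := by rw [smul_smul, sq]

end Rayleigh

section OperatorNorm

variable {ι : Type*} [Fintype ι] [DecidableEq ι]

lemma e2_mulVec_le_rayleighSup_mul {M : Matrix ι ι ℝ} (hM : M.PosSemidef) (q : ι → ℝ) :
    e2 (M *ᵥ q) ≤ rayleighSup M * e2 q := by
  have hr := rayleighSup_nonneg hM
  have h := quadForm_le_of_le_smul_one
    (mul_self_le_sq_smul_one hM hr (le_rayleighSup_smul_one hM.1)) q
  have hMM : q ⬝ᵥ (M * M) *ᵥ q = (M *ᵥ q) ⬝ᵥ (M *ᵥ q) := by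
    rw [← mulVec_mulVec, dotProduct_mulVec, ← mulVec_transpose,
      ← conjTranspose_eq_transpose_of_trivial, hM.1.eq]
  rw [hMM, ← e2_sq, ← e2_sq, ← mul_pow] at h
  exact (pow_le_pow_iff_left₀ (e2_nonneg _) (mul_nonneg hr (e2_nonneg q)) two_ne_zero).mp h

lemma opNorm_eq_rayleighSup {M : Matrix ι ι ℝ} (hM : M.PosSemidef) :
    opNorm M = rayleighSup M := by
  refine le_antisymm (Real.sSup_le ?_ (rayleighSup_nonneg hM)) (Real.sSup_le ?_ ?_)
  · rintro _ ⟨q, hq, rfl⟩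
    exact (e2_mulVec_le_rayleighSup_mul hM q).trans
      (mul_le_of_le_one_right (rayleighSup_nonneg hM) hq)
  · rintro _ ⟨w, hw, rfl⟩
    refine (dotProduct_mulVec_le_e2_mulVec M hw).trans (le_csSup ?_ ⟨w, hw.le, rfl⟩)
    exact ⟨_, by rintro _ ⟨q, hq, rfl⟩; exact e2_mulVec_le_norm M hq⟩
  · exact Real.sSup_nonneg (by rintro _ ⟨q, -, rfl⟩; exact e2_nonneg _)

end OperatorNorm

lemma sSup_mul_sSup_le_of_nonneg {S T : Set ℝ} {c : ℝ} (hS : ∀ x ∈ S, 0 ≤ x)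
    (hT : ∀ y ∈ T, 0 ≤ y) (hc : 0 ≤ c) (h : ∀ x ∈ S, ∀ y ∈ T, x * y ≤ c) :
    sSup S * sSup T ≤ c := by
  rw [← smul_eq_mul, ← Real.sSup_smul_of_nonneg (Real.sSup_nonneg hS)]
  refine Real.sSup_le (Set.forall_mem_image.mpr fun y hy => ?_) hc
  rw [smul_eq_mul, mul_comm, ← smul_eq_mul, ← Real.sSup_smul_of_nonneg (hT y hy)]
  refine Real.sSup_le (Set.forall_mem_image.mpr fun x hx => ?_) hc
  rw [smul_eq_mul, mul_comm]
  exact h x hx y hy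

section Kronecker

variable {ι κ : Type*} [Fintype ι] [Fintype κ]

lemma kronecker_le_kronecker_left {M M' : Matrix ι ι ℝ} {N : Matrix κ κ ℝ} (h : M ≤ M')
    (hN : N.PosSemidef) : M ⊗ₖ N ≤ M' ⊗ₖ N := by
  have hsub : M' ⊗ₖ N - M ⊗ₖ N = (M' - M) ⊗ₖ N := by ext; simp [sub_mul]
  rw [le_iff, hsub]
  exact (le_iff.mp h).kronecker hN

lemma kronecker_le_kronecker_right {M : Matrix ι ι ℝ} {N N' : Matrix κ κ ℝ}
    (hM : M.PosSemidef) (h : N ≤ N') : M ⊗ₖ N ≤ M ⊗ₖ N' := by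
  have hsub : M ⊗ₖ N' - M ⊗ₖ N = M ⊗ₖ (N' - N) := by ext; simp [mul_sub]
  rw [le_iff, hsub]
  exact hM.kronecker (le_iff.mp h)

lemma quadForm_kronecker (M : Matrix ι ι ℝ) (N : Matrix κ κ ℝ) (b : ι → ℝ) (a : κ → ℝ) :
    (fun p : ι × κ => b p.1 * a p.2) ⬝ᵥ (M ⊗ₖ N) *ᵥ (fun p => b p.1 * a p.2) =
      (b ⬝ᵥ M *ᵥ b) * (a ⬝ᵥ N *ᵥ a) := by
  simp only [dotProduct, mulVec, Fintype.sum_prod_type, kronecker_apply]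
  rw [Finset.sum_mul_sum]
  refine Finset.sum_congr rfl fun i _ => Finset.sum_congr rfl fun k _ => ?_
  rw [mul_mul_mul_comm, Finset.sum_mul_sum]
  simp only [Finset.mul_sum]
  exact Finset.sum_congr rfl fun j _ => Finset.sum_congr rfl fun l _ => by ring

variable [DecidableEq ι] [DecidableEq κ]

lemma rayleighSup_kronecker {M : Matrix ι ι ℝ} {N : Matrix κ κ ℝ} (hM : M.PosSemidef)
    (hN : N.PosSemidef) : rayleighSup (M ⊗ₖ N) = rayleighSup M * rayleighSup N := by
  have hrM := rayleighSup_nonneg hM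
  have hrN := rayleighSup_nonneg hN
  refine le_antisymm (rayleighSup_le_of_le_smul_one ?_ (mul_nonneg hrM hrN)) ?_
  · calc M ⊗ₖ N ≤ (rayleighSup M • 1) ⊗ₖ N :=
          kronecker_le_kronecker_left (le_rayleighSup_smul_one hM.1) hN
      _ ≤ (rayleighSup M • 1) ⊗ₖ (rayleighSup N • 1) :=
          kronecker_le_kronecker_right (PosSemidef.one.smul hrM) (le_rayleighSup_smul_one hN.1)
      _ = (rayleighSup M * rayleighSup N) • 1 := by
          rw [smul_kronecker, kronecker_smul, one_kronecker_one, smul_smul]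
  · refine sSup_mul_sSup_le_of_nonneg ?_ ?_ (rayleighSup_nonneg (hM.kronecker hN)) ?_
    · rintro _ ⟨b, -, rfl⟩; simpa using hM.dotProduct_mulVec_nonneg b
    · rintro _ ⟨a, -, rfl⟩; simpa using hN.dotProduct_mulVec_nonneg a
    · rintro _ ⟨b, hb, rfl⟩ _ ⟨a, ha, rfl⟩
      rw [← quadForm_kronecker]
      exact quadForm_le_rayleighSup _ (by rw [e2_kronecker, hb, ha, one_mul])

end Kronecker

lemma Matrix.PosSemidef.nucNorm_eq_trace {ι : Type*} [Fintype ι] [DecidableEq ι]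
    {M : Matrix ι ι ℝ} (hM : M.PosSemidef) : nucNorm M = M.trace := by
  have hsqrt : cfc Real.sqrt (Mᴴ * M) = M := by
    rw [← cfcₙ_eq_cfc, ← CFC.sqrt_eq_real_sqrt _ (posSemidef_conjTranspose_mul_self M).nonneg,
      hM.1.eq, CFC.sqrt_mul_self M hM.nonneg]
  rw [(posSemidef_conjTranspose_mul_self M).1.cfc_eq, IsHermitian.cfc,
    Unitary.conjStarAlgAut_apply] at hsqrt
  rw [nucNorm, hsqrt]

lemma Matrix.PosSemidef.blockDiagonal {ι κ : Type*} [Fintype ι] [Fintype κ] [DecidableEq κ]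
    {M : κ → Matrix ι ι ℝ} (hM : ∀ k, (M k).PosSemidef) :
    (Matrix.blockDiagonal M).PosSemidef := by
  classical
  choose S hS using fun k => CStarAlgebra.nonneg_iff_eq_star_mul_self.mp (hM k).nonneg
  have : Matrix.blockDiagonal M = (Matrix.blockDiagonal S)ᴴ * Matrix.blockDiagonal S := by
    rw [blockDiagonal_conjTranspose, ← blockDiagonal_mul]
    exact congrArg _ (funext hS)
  rw [this]
  exact posSemidef_conjTranspose_mul_self _

lemma vecMulVec_kronecker_vecMulVec {α ι ι' κ κ' : Type*} [CommSemiring α] (a : ι → α)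
    (b : ι' → α) (c : κ → α) (d : κ' → α) :
    vecMulVec a b ⊗ₖ vecMulVec c d =
      vecMulVec (fun p : ι × κ => a p.1 * c p.2) (fun q : ι' × κ' => b q.1 * d q.2) := by
  ext p q
  simp only [kroneckerMap_apply, vecMulVec_apply]
  ring

section D0

variable {n m : ℕ}

def D0Factor (c : Fin n → Fin n → ℝ) (d : Fin m → Fin m → ℝ) (w : Fin n × Fin m → ℝ)
    (k : Fin m) : Fin n → ℝ :=
  fun i => w ⬝ᵥ fun p => c i p.1 * d k p.2

lemma D0_eq_blockDiagonal (c : Fin n → Fin n → ℝ) (d : Fin m → Fin m → ℝ)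
    (w : Fin n × Fin m → ℝ) :
    D0 c d w = blockDiagonal fun k => vecMulVec (D0Factor c d w k) (D0Factor c d w k) := by
  refine congrArg blockDiagonal (funext fun k => ?_)
  ext i j
  simp only [of_apply, vecMulVec_kronecker_vecMulVec, vecMulVec_mulVec, vecMulVec_apply]
  rw [op_smul_eq_smul, dotProduct_smul, smul_eq_mul, dotProduct_comm _ w, mul_comm]
  rfl

lemma D0_posSemidef (c : Fin n → Fin n → ℝ) (d : Fin m → Fin m → ℝ) (w : Fin n × Fin m → ℝ) :
    (D0 c d w).PosSemidef := by
  rw [D0_eq_blockDiagonal]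
  exact PosSemidef.blockDiagonal fun k => by
    simpa using posSemidef_vecMulVec_self_star (D0Factor c d w k)

lemma trace_D0 (P : Matrix (Fin n) (Fin n) ℝ) (Q : Matrix (Fin m) (Fin m) ℝ)
    (w : Fin n × Fin m → ℝ) :
    (D0 (fun i r => P r i) (fun k s => Q s k) w).trace =
      w ⬝ᵥ ((P * Pᵀ) ⊗ₖ (Q * Qᵀ)) *ᵥ w := by
  set v := w ᵥ* (P ⊗ₖ Q)
  calc (D0 (fun i r => P r i) (fun k s => Q s k) w).trace
      = ∑ k, ∑ i, v (i, k) * v (i, k) := by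
        rw [D0_eq_blockDiagonal, trace_blockDiagonal]
        rfl
    _ = v ⬝ᵥ v := by rw [dotProduct, Fintype.sum_prod_type, Finset.sum_comm]
    _ = w ⬝ᵥ ((P * Pᵀ) ⊗ₖ (Q * Qᵀ)) *ᵥ w := by
        rw [mul_kronecker_mul, kroneckerMap_transpose, ← mulVec_mulVec, dotProduct_mulVec,
          mulVec_transpose]

end D0

theorem D0_psd_nucNorm_general
    (n m : ℕ)
    (A : Matrix (Fin m) (Fin m) ℝ) (B : Matrix (Fin n) (Fin n) ℝ)
    (Asq : Matrix (Fin m) (Fin m) ℝ) (Bsq : Matrix (Fin n) (Fin n) ℝ)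
    (hA : A.PosDef) (hB : B.PosDef)
    (hAsq : Asq.PosDef) (hAsqA : Asq * Asq = A)
    (hBsq : Bsq.PosDef) (hBsqB : Bsq * Bsq = B) :
    (∀ w : Fin n × Fin m → ℝ,
      (D0 (fun i => fun r => Bsq r i) (fun k => fun s => Asq s k) w).PosSemidef) ∧
    (∀ w : Fin n × Fin m → ℝ,
      nucNorm (D0 (fun i => fun r => Bsq r i) (fun k => fun s => Asq s k) w) =
        w ⬝ᵥ ((B ⊗ₖ A).mulVec w)) ∧
    sSup {x : ℝ | ∃ w : Fin n × Fin m → ℝ, e2 w = 1 ∧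
        x = nucNorm (D0 (fun i => fun r => Bsq r i) (fun k => fun s => Asq s k) w)} =
      opNorm B * opNorm A := by
  have hnuc : ∀ w : Fin n × Fin m → ℝ,
      nucNorm (D0 (fun i r => Bsq r i) (fun k s => Asq s k) w) = w ⬝ᵥ (B ⊗ₖ A) *ᵥ w := by
    intro w
    rw [(D0_posSemidef _ _ w).nucNorm_eq_trace, trace_D0, ← conjTranspose_eq_transpose_of_trivial,
      ← conjTranspose_eq_transpose_of_trivial, hBsq.1.eq, hAsq.1.eq, hBsqB, hAsqA]
  refine ⟨fun w => D0_posSemidef _ _ w, hnuc, ?_⟩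
  simp_rw [hnuc]
  change rayleighSup (B ⊗ₖ A) = _
  rw [rayleighSup_kronecker hB.posSemidef hA.posSemidef,
    opNorm_eq_rayleighSup hB.posSemidef, opNorm_eq_rayleighSup hA.posSemidef]

/-- Lemma: `𝔻₀(w)` is positive semidefinite, its nuclear norm is
`wᵀ(B₀ ⊗ A₀)w`, and its supremum over the sphere is `‖B₀‖₂‖A₀‖₂`. -/
theorem D0_psd_nucNorm
    (n m : ℕ) (hn : 0 < n) (hm : 0 < m)
    (A : Matrix (Fin m) (Fin m) ℝ) (B : Matrix (Fin n) (Fin n) ℝ)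
    (Asq : Matrix (Fin m) (Fin m) ℝ) (Bsq : Matrix (Fin n) (Fin n) ℝ)
    (hA : A.PosDef) (hB : B.PosDef)
    (hAsq : Asq.PosDef) (hAsqA : Asq * Asq = A)
    (hBsq : Bsq.PosDef) (hBsqB : Bsq * Bsq = B) :
    (∀ w : Fin n × Fin m → ℝ,
      (D0 (fun i => fun r => Bsq r i) (fun k => fun s => Asq s k) w).PosSemidef) ∧
    (∀ w : Fin n × Fin m → ℝ,
      nucNorm (D0 (fun i => fun r => Bsq r i) (fun k => fun s => Asq s k) w) =
        w ⬝ᵥ ((B ⊗ₖ A).mulVec w)) ∧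
    sSup {x : ℝ | ∃ w : Fin n × Fin m → ℝ, e2 w = 1 ∧
        x = nucNorm (D0 (fun i => fun r => Bsq r i) (fun k => fun s => Asq s k) w)} =
      opNorm B * opNorm A :=
  D0_psd_nucNorm_general n m A B Asq Bsq hA hB hAsq hAsqA hBsq hBsqB
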